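/- arXiv:1501.04256 — 5 statements merged into one kernel-verified Lean document; each statement's English description precedes it below -/
import Mathlib

section
/- For all nonnegative integers m and n and all complex numbers y and z, the sum over k from 0 to n of binomial(n,k) * (-1)^k * (y + z*k)^m equals (-1)^n * n! * the sum over p from 0 to m of binomial(m,p) * S(p,n) * z^p * y^(m-p), where S(p,n) denotes the Stirling number of the second kind. -/
/-!
Expanding `(y + z k)^m` binomially reduces the claim to the case `y = 0, z = 1`:
`∑ k, C(n,k) (-1)^k k^p = (-1)^n n! S(p,n)`. Both sides of this identity satisfy the Stirling
recurrence in `(p, n)`: Pascal's rule and the absorption identity `k C(n+1,k) = (n+1) C(n,k-1)`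
turn the left side at `(p+1, n+1)` into `(n+1)` times the difference of the left sides at
`(p, n+1)` and `(p, n)`.
-/

/-- Stirling numbers of the second kind, via the standard recurrence. -/
def stirling2 : ℕ → ℕ → ℕ
  | 0, 0 => 1
  | 0, _ + 1 => 0
  | _ + 1, 0 => 0
  | m + 1, n + 1 => (n + 1) * stirling2 m (n + 1) + stirling2 m n

open Finset

variable {R : Type*} [CommRing R]

theorem sum_range_succ_choose_succ_mul_neg_one_pow (g : ℕ → R) (n : ℕ) :
    ∑ k ∈ range (n + 2), ((n + 1).choose k : R) * (-1) ^ k * g k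
      = ∑ k ∈ range (n + 1), (n.choose k : R) * (-1) ^ k * (g k - g (k + 1)) := by
  simp only [mul_assoc]
  rw [sum_choose_succ_mul (fun k _ => (-1) ^ k * g k) n, ← sub_eq_zero]
  simp only [← sum_add_distrib, ← sum_sub_distrib, ← mul_add, ← mul_sub]
  exact sum_eq_zero fun k _ => by ring

theorem sum_range_succ_choose_succ_mul_neg_one_pow_mul_cast_mul (g : ℕ → R) (n : ℕ) :
    ∑ k ∈ range (n + 2), ((n + 1).choose k : R) * (-1) ^ k * (k * g k)
      = -(n + 1) * ∑ k ∈ range (n + 1), (n.choose k : R) * (-1) ^ k * g (k + 1) := by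
  rw [sum_range_succ', mul_sum]
  simp only [Nat.cast_zero, zero_mul, mul_zero, add_zero]
  refine sum_congr rfl fun k _ => ?_
  have absorb : ((n + 1).choose (k + 1) : R) * (k + 1) = (n + 1) * n.choose k := by
    exact_mod_cast congrArg (Nat.cast : ℕ → R) (Nat.add_one_mul_choose_eq n k).symm
  push_cast
  linear_combination (-1) ^ (k + 1) * g (k + 1) * absorb

theorem sum_range_choose_mul_neg_one_pow_mul_pow (p n : ℕ) :
    ∑ k ∈ range (n + 1), (n.choose k : R) * (-1) ^ k * (k : R) ^ p
      = (-1) ^ n * n.factorial * stirling2 p n := by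
  induction p generalizing n with
  | zero =>
    cases n with
    | zero => simp [stirling2]
    | succ n =>
      rw [sum_range_succ_choose_succ_mul_neg_one_pow]
      simp [stirling2]
  | succ p ih =>
    cases n with
    | zero => simp [stirling2]
    | succ n =>
      have pascal := sum_range_succ_choose_succ_mul_neg_one_pow (fun k => (k : R) ^ p) n
      simp only [mul_sub, sum_sub_distrib, Nat.cast_succ] at pascal
      simp only [pow_succ', stirling2, Nat.factorial_succ,
        sum_range_succ_choose_succ_mul_neg_one_pow_mul_cast_mul (fun k => (k : R) ^ p)]
      rw [ih (n + 1), ih n, Nat.factorial_succ] at pascal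
      push_cast at pascal ⊢
      linear_combination -(n + 1 : R) * pascal

theorem sum_range_choose_mul_neg_one_pow_mul_add_mul_pow (m n : ℕ) (y z : R) :
    ∑ k ∈ range (n + 1), (n.choose k : R) * (-1) ^ k * (y + z * k) ^ m
      = (-1) ^ n * n.factorial *
        ∑ p ∈ range (m + 1), (m.choose p : R) * stirling2 p n * z ^ p * y ^ (m - p) := by
  calc ∑ k ∈ range (n + 1), (n.choose k : R) * (-1) ^ k * (y + z * k) ^ m
      = ∑ p ∈ range (m + 1), (m.choose p : R) * z ^ p * y ^ (m - p) *
          ∑ k ∈ range (n + 1), (n.choose k : R) * (-1) ^ k * (k : R) ^ p := by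
        simp_rw [add_comm y, add_pow, mul_sum]
        rw [sum_comm]
        exact sum_congr rfl fun p _ => sum_congr rfl fun k _ => by ring
    _ = _ := by
        simp_rw [sum_range_choose_mul_neg_one_pow_mul_pow, mul_sum]
        exact sum_congr rfl fun p _ => by ring

theorem binomial_sum_eq_stirling_sum (m n : ℕ) (y z : ℂ) :
    ∑ k ∈ Finset.range (n + 1), (n.choose k : ℂ) * (-1) ^ k * (y + z * k) ^ m
      = (-1) ^ n * (n.factorial : ℂ) *
        ∑ p ∈ Finset.range (m + 1),
          (m.choose p : ℂ) * (stirling2 p n : ℂ) * z ^ p * y ^ (m - p) :=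
  sum_range_choose_mul_neg_one_pow_mul_add_mul_pow m n y z
end

section
/- Let f(t) be a polynomial with complex coefficients of degree at most p, with f(t) = sum_{m} a_m t^m. Then for any complex number z, the sum over n from 1 to p of (1/n) * (sum over k from 0 to n of binomial(n,k) * (-1)^k * f(z*k)) equals -a_1 * z, where a_1 = f'(0). -/
/-!
Write `S n g = ∑ k ≤ n, (n choose k) (-1)^k g k`, which is `(-1)^n Δ^n g 0`. Hence `S n` kills
polynomials of degree `< n`, and `S (n+1) g = S n g - S n (g (· + 1))`. The absorption identity
`k (n+1 choose k) = (n+1) (n choose k-1)` gives `S (n+1) (x h x) / (n+1) = -S n (h (· + 1))`.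
Writing `g = g 0 + x h x`, the sum `∑ n ∈ [1, p], S n g / n` becomes `-∑ j < p, S j (h (· + 1))`,
which telescopes to `-(h 0 - S p h) = -h 0 = -g'(0)`. Apply this to `g x = f (z x)`.
-/

open Finset Polynomial fwdDiff

section

variable {R : Type*} [CommRing R]

def altChooseSum (n : ℕ) (g : R → R) : R :=
  ∑ k ∈ range (n + 1), (n.choose k : R) * (-1) ^ k * g k

theorem altChooseSum_eq_neg_one_pow_mul_fwdDiff_iter (n : ℕ) (g : R → R) :
    altChooseSum n g = (-1) ^ n * (Δ_[1] ^[n] g 0) := by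
  rw [fwdDiff_iter_eq_sum_shift, altChooseSum, mul_sum]
  refine sum_congr rfl fun k hk => ?_
  obtain ⟨j, rfl⟩ := Nat.exists_eq_add_of_le (mem_range_succ_iff.mp hk)
  have hsign : (-1 : R) ^ (k + j) * (-1) ^ (k + j - k) = (-1) ^ k := by
    simp [pow_add, mul_assoc, ← mul_pow]
  rw [zsmul_eq_mul, zero_add, nsmul_one, ← mul_assoc]
  push_cast
  rw [← mul_assoc, hsign]
  ring

theorem altChooseSum_zero (g : R → R) : altChooseSum 0 g = g 0 := by
  simp [altChooseSum]

theorem altChooseSum_add (n : ℕ) (g₁ g₂ : R → R) :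
    altChooseSum n (fun x => g₁ x + g₂ x) = altChooseSum n g₁ + altChooseSum n g₂ := by
  simp only [altChooseSum, mul_add, sum_add_distrib]

theorem altChooseSum_succ (n : ℕ) (g : R → R) :
    altChooseSum (n + 1) g = altChooseSum n g - altChooseSum n (fun x => g (x + 1)) := by
  simp only [altChooseSum_eq_neg_one_pow_mul_fwdDiff_iter, Function.iterate_succ_apply',
    fwdDiff_iter_comp_add, fwdDiff, zero_add]
  ring

theorem altChooseSum_eval_eq_zero_of_natDegree_lt {n : ℕ} {P : R[X]} (hP : P.natDegree < n) :
    altChooseSum n P.eval = 0 := by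
  rw [altChooseSum_eq_neg_one_pow_mul_fwdDiff_iter, fwdDiff_iter_eq_zero_of_degree_lt hP,
    Pi.zero_apply, mul_zero]

theorem altChooseSum_succ_const (n : ℕ) (c : R) : altChooseSum (n + 1) (fun _ => c) = 0 := by
  simpa using altChooseSum_eval_eq_zero_of_natDegree_lt (P := C c) (n := n + 1) (by simp)

theorem altChooseSum_succ_mul_self (n : ℕ) (g : R → R) :
    altChooseSum (n + 1) (fun x => x * g x) = -(n + 1) * altChooseSum n (fun x => g (x + 1)) := by
  rw [altChooseSum, sum_range_succ', altChooseSum, mul_sum]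
  simp only [Nat.cast_zero, zero_mul, mul_zero, add_zero]
  refine sum_congr rfl fun k _ => ?_
  have habsorb : ((n + 1).choose (k + 1) : R) * (k + 1) = (n + 1) * n.choose k := by
    exact_mod_cast congrArg (Nat.cast : ℕ → R) (Nat.add_one_mul_choose_eq n k).symm
  push_cast
  linear_combination (-(-1 : R) ^ k * g (k + 1)) * habsorb

theorem sum_range_altChooseSum_comp_add_one (q : ℕ) (g : R → R) :
    ∑ j ∈ range q, altChooseSum j (fun x => g (x + 1)) = g 0 - altChooseSum q g := by
  have hstep : ∀ j, altChooseSum j (fun x => g (x + 1)) =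
      altChooseSum j g - altChooseSum (j + 1) g := fun j => by
    rw [altChooseSum_succ, sub_sub_cancel]
  simp only [hstep, sum_range_sub', altChooseSum_zero]

end

theorem sum_Icc_one_div_mul_altChooseSum_eval {K : Type*} [Field K] [CharZero K] {p : ℕ}
    {P : K[X]} (hP : P.natDegree ≤ p) :
    ∑ n ∈ Icc 1 p, (1 / n : K) * altChooseSum n P.eval = -P.coeff 1 := by
  rcases p with _ | p
  · simp [coeff_eq_zero_of_natDegree_lt (hP.trans_lt zero_lt_one)]
  have hP_eq : P.eval = fun x => P.coeff 0 + x * P.divX.eval x := funext fun x => by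
    conv_lhs => rw [← divX_mul_X_add P]
    simp only [eval_add, eval_mul, eval_X, eval_C]
    ring
  have hterm : ∀ j, (1 / (j + 1 : ℕ) : K) * altChooseSum (j + 1) P.eval =
      -altChooseSum j (fun x => P.divX.eval (x + 1)) := fun j => by
    rw [hP_eq, altChooseSum_add, altChooseSum_succ_mul_self, altChooseSum_succ_const]
    field_simp
    push_cast
    ring
  have hdivX : P.divX.natDegree < p + 1 := by
    rw [natDegree_divX_eq_natDegree_tsub_one]; omega
  rw [← Ico_add_one_right_eq_Icc, sum_Ico_eq_sum_range, Nat.add_sub_cancel]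
  simp only [add_comm 1, hterm, sum_neg_distrib]
  rw [sum_range_altChooseSum_comp_add_one (p + 1) P.divX.eval,
    altChooseSum_eval_eq_zero_of_natDegree_lt hdivX, sub_zero, ← coeff_zero_eq_eval_zero, coeff_divX]

theorem binomial_sum_poly_eval (p : ℕ) (f : Polynomial ℂ) (hdeg : f.degree ≤ p) (z : ℂ) :
    ∑ n ∈ Finset.Icc 1 p, (1 / n : ℂ) *
      ∑ k ∈ Finset.range (n + 1), (n.choose k : ℂ) * (-1) ^ k * f.eval (z * k)
      = -(f.coeff 1) * z := by
  have hcomp : (f.comp (C z * X)).natDegree ≤ p :=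
    natDegree_comp_le.trans <| (Nat.mul_le_mul (natDegree_le_iff_degree_le.mpr hdeg)
      ((natDegree_C_mul_le z X).trans natDegree_X_le)).trans (by simp)
  simpa only [one_div, neg_mul, altChooseSum, eval_comp, eval_mul, eval_C, eval_X,
    comp_C_mul_X_coeff, pow_one] using sum_Icc_one_div_mul_altChooseSum_eval hcomp
end

section
/- For every integer r ≥ 1 and every nonnegative integer m, the poly-Bernoulli polynomial satisfies B_m^{(r)}(y) = sum over n from 0 to m of 1/(n+1)^r * sum over k from 0 to n of binomial(n,k) * (-1)^k * (y - k)^m, for all real (or complex) y. -/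
/-!
Expanding `(y - k)^m` binomially reduces the identity to the explicit formula
`∑ₖ C(n,k) (-1)^k k^j = (-1)^n n! S(j,n)` for Stirling numbers of the second kind; the range of
the outer sum may be taken up to `m` because `S(j,n) = 0` for `n > j`. The explicit formula is
proved by induction on `j`: writing `A = ∑ₖ C(n,k) (-1)^k (k+1)^j`, the identity
`k C(n+1,k) = (n+1) C(n,k-1)` turns the sum for `(j+1, n+1)` into `-(n+1) A`, while Pascal's rule
turns the sum for `(j, n+1)` into the sum for `(j, n)` minus `A`; eliminating `A` gives exactly
the recurrence `S(j+1,n+1) = (n+1) S(j,n+1) + S(j,n)`.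
-/

open Finset
open scoped Nat

/-- Poly-Bernoulli numbers `B_j^{(r)}`. -/
def polyBernoulli (r j : ℕ) : ℚ :=
  (-1) ^ j * ∑ i ∈ Finset.range (j + 1),
    (stirling2 j i : ℚ) * (i.factorial : ℚ) * (-1) ^ i / ((i : ℚ) + 1) ^ r

/-- Poly-Bernoulli polynomials `B_m^{(r)}(y)`. -/
noncomputable def polyBernoulliPoly (r m : ℕ) (y : ℝ) : ℝ :=
  ∑ j ∈ Finset.range (m + 1), (m.choose j : ℝ) * y ^ (m - j) * (polyBernoulli r j : ℝ)

theorem stirling2_eq_stirlingSecond : stirling2 = Nat.stirlingSecond := by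
  funext j n
  induction j generalizing n with
  | zero => cases n <;> rfl
  | succ j ih => cases n <;> simp [stirling2, Nat.stirlingSecond_succ_succ, ih]

section AlternatingBinomialSum

variable {R : Type*} [CommRing R]

def alternatingBinomialSum (n : ℕ) (f : ℕ → R) : R :=
  ∑ k ∈ range (n + 1), (n.choose k : R) * (-1) ^ k * f k

theorem alternatingBinomialSum_succ (n : ℕ) (f : ℕ → R) :
    alternatingBinomialSum (n + 1) f = alternatingBinomialSum n (fun k ↦ f k - f (k + 1)) := by
  unfold alternatingBinomialSum
  simp_rw [mul_assoc]
  rw [Finset.sum_choose_succ_mul (fun i _ ↦ (-1) ^ i * f i), ← sum_add_distrib]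
  refine sum_congr rfl fun k _ ↦ ?_
  ring

theorem alternatingBinomialSum_succ_mul (n : ℕ) (g : ℕ → R) :
    alternatingBinomialSum (n + 1) (fun k ↦ k * g k)
      = -(n + 1) * alternatingBinomialSum n (fun k ↦ g (k + 1)) := by
  unfold alternatingBinomialSum
  rw [sum_range_succ', mul_sum]
  simp only [Nat.cast_zero, zero_mul, mul_zero, add_zero]
  refine sum_congr rfl fun k _ ↦ ?_
  have h := congrArg (Nat.cast (R := R)) (Nat.add_one_mul_choose_eq n k)
  push_cast at h ⊢
  linear_combination (-1 : R) ^ k * g (k + 1) * h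

theorem alternatingBinomialSum_pow (j n : ℕ) :
    alternatingBinomialSum n (fun k ↦ (k : R) ^ j) = (-1) ^ n * n ! * Nat.stirlingSecond j n := by
  induction j generalizing n with
  | zero =>
    cases n with
    | zero => simp [alternatingBinomialSum]
    | succ n =>
      rw [alternatingBinomialSum_succ]
      simp [alternatingBinomialSum]
  | succ j ih =>
    cases n with
    | zero => simp [alternatingBinomialSum]
    | succ n =>
      have hshift : alternatingBinomialSum n (fun k ↦ ((k + 1 : ℕ) : R) ^ j)
          = alternatingBinomialSum n (fun k ↦ (k : R) ^ j)
            - alternatingBinomialSum (n + 1) (fun k ↦ (k : R) ^ j) := by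
        rw [alternatingBinomialSum_succ]
        simp only [alternatingBinomialSum, mul_sub, sum_sub_distrib]
        ring
      calc alternatingBinomialSum (n + 1) (fun k ↦ (k : R) ^ (j + 1))
          = -(n + 1) * alternatingBinomialSum n (fun k ↦ ((k + 1 : ℕ) : R) ^ j) := by
            simp_rw [_root_.pow_succ']
            exact alternatingBinomialSum_succ_mul n _
        _ = _ := by
            rw [hshift, ih, ih, Nat.stirlingSecond_succ_succ, Nat.factorial_succ]
            push_cast
            ring

theorem alternatingBinomialSum_sub_pow (n m : ℕ) (y : R) :
    alternatingBinomialSum n (fun k ↦ (y - k) ^ m)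
      = ∑ j ∈ range (m + 1),
          (m.choose j : R) * y ^ (m - j) * (-1) ^ j *
            alternatingBinomialSum n (fun k ↦ (k : R) ^ j) := by
  unfold alternatingBinomialSum
  simp_rw [sub_eq_neg_add y, add_pow, mul_sum]
  rw [sum_comm]
  refine sum_congr rfl fun j _ ↦ sum_congr rfl fun k _ ↦ ?_
  rw [neg_pow]
  ring

end AlternatingBinomialSum

theorem polyBernoulli_eq_sum_alternatingBinomialSum {K : Type*} [Field K] [CharZero K]
    (r : ℕ) {j N : ℕ} (hjN : j ≤ N) :
    (polyBernoulli r j : K)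
      = (-1) ^ j * ∑ n ∈ range (N + 1),
          alternatingBinomialSum n (fun k ↦ (k : K) ^ j) / ((n : K) + 1) ^ r := by
  have hsub : range (j + 1) ⊆ range (N + 1) := range_subset_range.2 (by omega)
  rw [← sum_subset hsub fun n _ hn ↦ ?_]
  · simp only [polyBernoulli, alternatingBinomialSum_pow, stirling2_eq_stirlingSecond]
    push_cast
    congr 1
    refine sum_congr rfl fun n _ ↦ ?_
    ring
  · rw [alternatingBinomialSum_pow, Nat.stirlingSecond_eq_zero_of_lt (by simpa using hn)]
    simp

theorem polyBernoulliPoly_binomial_sum_general (r : ℕ) (m : ℕ) (y : ℝ) :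
    polyBernoulliPoly r m y
      = ∑ n ∈ Finset.range (m + 1), (1 / ((n : ℝ) + 1) ^ r) *
          ∑ k ∈ Finset.range (n + 1), (n.choose k : ℝ) * (-1) ^ k * (y - k) ^ m := by
  calc polyBernoulliPoly r m y
      = ∑ j ∈ range (m + 1), (m.choose j : ℝ) * y ^ (m - j) * ((-1) ^ j *
          ∑ n ∈ range (m + 1),
            alternatingBinomialSum n (fun k ↦ (k : ℝ) ^ j) / ((n : ℝ) + 1) ^ r) :=
        sum_congr rfl fun j hj ↦ by
          rw [polyBernoulli_eq_sum_alternatingBinomialSum r (mem_range_succ_iff.1 hj)]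
    _ = ∑ n ∈ range (m + 1), (1 / ((n : ℝ) + 1) ^ r) *
          alternatingBinomialSum n (fun k ↦ (y - k) ^ m) := by
        simp_rw [alternatingBinomialSum_sub_pow, mul_sum]
        rw [sum_comm]
        refine sum_congr rfl fun n _ ↦ sum_congr rfl fun j _ ↦ ?_
        ring

theorem polyBernoulliPoly_binomial_sum (r : ℕ) (hr : 1 ≤ r) (m : ℕ) (y : ℝ) :
    polyBernoulliPoly r m y
      = ∑ n ∈ Finset.range (m + 1), (1 / ((n : ℝ) + 1) ^ r) *
          ∑ k ∈ Finset.range (n + 1), (n.choose k : ℝ) * (-1) ^ k * (y - k) ^ m :=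
  polyBernoulliPoly_binomial_sum_general r m y
end

section
/- For Re(s) > 0, a > 0, and every nonnegative integer n: sum_{k=0}^n binomial(n,k) * (-1)^k / (k+a)^s = (1/Γ(s)) * ∫_0^∞ t^{s-1} e^{-a t} (1 - e^{-t})^n dt. -/
/-!
Expand `(1 - e^{-t})^n` by the binomial theorem: the integral becomes a finite alternating sum
of Euler integrals `∫₀^∞ t^{s-1} e^{-(k+a)t} dt = Γ(s) / (k+a)^s`.
-/

open MeasureTheory Set Real

lemma integrableOn_rpow_mul_exp_neg_mul {s r : ℝ} (hs : 0 < s) (hr : 0 < r) :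
    IntegrableOn (fun t : ℝ => t ^ (s - 1) * exp (-(r * t))) (Ioi 0) :=
  .of_integral_ne_zero (by rw [integral_rpow_mul_exp_neg_mul_Ioi hs hr]; positivity)

lemma one_div_rpow_eq_integral {s r : ℝ} (hs : 0 < s) (hr : 0 < r) :
    1 / r ^ s = 1 / Gamma s * ∫ t in Ioi 0, t ^ (s - 1) * exp (-(r * t)) := by
  rw [integral_rpow_mul_exp_neg_mul_Ioi hs hr, div_rpow zero_le_one hr.le, one_rpow,
    one_div_mul_eq_div, mul_div_cancel_right₀ _ (Gamma_pos_of_pos hs).ne']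

lemma exp_neg_mul_mul_one_sub_exp_neg_pow (a t : ℝ) (n : ℕ) :
    exp (-a * t) * (1 - exp (-t)) ^ n
      = ∑ k ∈ Finset.range (n + 1), (n.choose k : ℝ) * (-1) ^ k * exp (-((k + a) * t)) := by
  rw [sub_eq_neg_add, add_pow, Finset.mul_sum]
  refine Finset.sum_congr rfl fun k _ => ?_
  have hterm : exp (-((k + a) * t)) = exp (-a * t) * exp (-t) ^ k := by
    rw [← exp_nat_mul, ← exp_add]
    ring_nf
  rw [hterm]
  ring

theorem binomial_sum_rpow_integral (s a : ℝ) (hs : 0 < s) (ha : 0 < a) (n : ℕ) :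
    ∑ k ∈ Finset.range (n + 1), (n.choose k : ℝ) * (-1) ^ k / ((k : ℝ) + a) ^ s
      = (1 / Real.Gamma s) *
        ∫ t in Set.Ioi (0 : ℝ), t ^ (s - 1) * Real.exp (-a * t) * (1 - Real.exp (-t)) ^ n := by
  have hka : ∀ k : ℕ, 0 < (k : ℝ) + a := fun k => by positivity
  have hexpand : ∀ t : ℝ, t ^ (s - 1) * exp (-a * t) * (1 - exp (-t)) ^ n
      = ∑ k ∈ Finset.range (n + 1),
          (n.choose k : ℝ) * (-1) ^ k * (t ^ (s - 1) * exp (-((k + a) * t))) := fun t => by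
    rw [mul_assoc, exp_neg_mul_mul_one_sub_exp_neg_pow, Finset.mul_sum]
    exact Finset.sum_congr rfl fun _ _ => by ring
  simp_rw [hexpand]
  rw [integral_finsetSum _ fun k _ => (integrableOn_rpow_mul_exp_neg_mul hs (hka k)).const_mul _,
    Finset.mul_sum]
  refine Finset.sum_congr rfl fun k _ => ?_
  rw [integral_const_mul, div_eq_mul_one_div, one_div_rpow_eq_integral hs (hka k)]
  ring
end

section
/- For real s > 1 and a > 0, the Hurwitz zeta function satisfies s * ζ(s+1, a) = sum over n from 0 to ∞ of 1/(n+1) * (sum over k from 0 to n of binomial(n,k) * (-1)^k / (a+k)^s), where the outer series converges. -/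
open MeasureTheory Real Set Filter

-- integrability of t^(p-1) * exp(-(r t)) on Ioi 0
lemma aux_integrable {p r : ℝ} (hp : 0 < p) (hr : 0 < r) :
    IntegrableOn (fun t : ℝ => t ^ (p - 1) * Real.exp (-(r * t))) (Ioi 0) := by
  have := integrableOn_rpow_mul_exp_neg_mul_rpow (p := 1) (s := p - 1) (b := r)
    (by linarith) zero_lt_one hr
  refine this.congr_fun (fun t ht => ?_) measurableSet_Ioi
  simp only [Real.rpow_one, neg_mul]

-- binomial identity pointwise
lemma aux_binom (s a : ℝ) (n : ℕ) (t : ℝ) :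
    ∑ k ∈ Finset.range (n + 1), (n.choose k : ℝ) * (-1) ^ k *
      (t ^ (s - 1) * Real.exp (-((a + k) * t))) =
    t ^ (s - 1) * Real.exp (-(a * t)) * (1 - Real.exp (-t)) ^ n := by
  have h : (1 - Real.exp (-t)) ^ n = ((-Real.exp (-t)) + 1) ^ n := by ring_nf
  rw [h, add_pow, Finset.mul_sum]
  refine Finset.sum_congr rfl (fun k hk => ?_)
  have he : Real.exp (-((a + k) * t)) = Real.exp (-(a * t)) * Real.exp (-t) ^ k := by
    rw [← Real.exp_nat_mul, ← Real.exp_add]; ring_nf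
  rw [he, neg_pow]
  ring

-- inner sum = integral of F n over Ioi 0, divided by Gamma s
lemma aux_inner (s a : ℝ) (hs : 1 < s) (ha : 0 < a) (n : ℕ) :
    ∑ k ∈ Finset.range (n + 1), (n.choose k : ℝ) * (-1) ^ k / (a + k) ^ s =
    (∫ t in Ioi (0:ℝ), t ^ (s - 1) * Real.exp (-(a * t)) * (1 - Real.exp (-t)) ^ n) /
      Real.Gamma s := by
  have hs0 : 0 < s := by linarith
  have hak : ∀ k : ℕ, (0:ℝ) < a + k := fun k => by positivity
  have hint : ∫ t in Ioi (0:ℝ), t ^ (s - 1) * Real.exp (-(a * t)) * (1 - Real.exp (-t)) ^ n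
      = ∑ k ∈ Finset.range (n + 1), (n.choose k : ℝ) * (-1) ^ k *
        ∫ t in Ioi (0:ℝ), t ^ (s - 1) * Real.exp (-((a + k) * t)) := by
    rw [← Finset.sum_congr rfl (fun k (_ : k ∈ Finset.range (n+1)) =>
      (integral_const_mul ((n.choose k : ℝ) * (-1) ^ k) _)),
      ← integral_finset_sum]
    · exact setIntegral_congr_fun measurableSet_Ioi (fun t _ => (aux_binom s a n t).symm)
    · exact fun k _ => ((aux_integrable hs0 (hak k)).const_mul ((n.choose k : ℝ) * (-1) ^ k) : _)
  rw [hint]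
  rw [Finset.sum_div]
  refine Finset.sum_congr rfl (fun k hk => ?_)
  rw [integral_rpow_mul_exp_neg_mul_Ioi hs0 (hak k)]
  rw [Real.div_rpow zero_le_one (le_of_lt (hak k)), Real.one_rpow]
  have hΓ : Real.Gamma s ≠ 0 := (Real.Gamma_pos_of_pos hs0).ne'
  field_simp

lemma aux_logsum (s a : ℝ) (hs : 1 < s) {t : ℝ} (ht : 0 < t) :
    HasSum (fun n : ℕ => (1 / ((n:ℝ) + 1)) *
      ((t ^ (s - 1) * Real.exp (-(a * t)) * (1 - Real.exp (-t)) ^ n) / Real.Gamma s))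
      (t ^ s * Real.exp (-(a * t)) / ((1 - Real.exp (-t)) * Real.Gamma s)) := by
  have hΓ : Real.Gamma s ≠ 0 := (Real.Gamma_pos_of_pos (by linarith)).ne'
  set x : ℝ := 1 - Real.exp (-t) with hx
  have hx0 : 0 < x := by
    simp only [hx, sub_pos]
    exact Real.exp_lt_one_iff.mpr (by linarith)
  have hx1 : x < 1 := by
    have := Real.exp_pos (-t); simp only [hx]; linarith
  have hts : t ^ s = t ^ (s - 1) * t := by
    nth_rewrite 1 [show s = s - 1 + 1 by ring]
    exact Real.rpow_add_one ht.ne' (s-1)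
  have h0 := Real.hasSum_pow_div_log_of_abs_lt_one (x := x) (by rw [abs_of_pos hx0]; exact hx1)
  have hlog : -Real.log (1 - x) = t := by
    simp only [hx, sub_sub_cancel, Real.log_exp]; ring
  rw [hlog] at h0
  have h1 := h0.mul_right (t ^ (s - 1) * Real.exp (-(a * t)) / (x * Real.Gamma s))
  convert h1 using 1
  · rfl
  · funext n
    have hn : ((n:ℝ) + 1) ≠ 0 := by positivity
    rw [pow_succ]
    field_simp
  · rw [hts]
    field_simp

lemma aux_geom (s a : ℝ) (hs : 1 < s) (ha : 0 < a) {t : ℝ} (ht : 0 < t) :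
    HasSum (fun k : ℕ => t ^ s * Real.exp (-((a + k) * t)) / Real.Gamma s)
      (t ^ s * Real.exp (-(a * t)) / ((1 - Real.exp (-t)) * Real.Gamma s)) := by
  have hΓ : Real.Gamma s ≠ 0 := (Real.Gamma_pos_of_pos (by linarith)).ne'
  have hr0 : (0:ℝ) ≤ Real.exp (-t) := (Real.exp_pos _).le
  have hr1 : Real.exp (-t) < 1 := Real.exp_lt_one_iff.mpr (by linarith)
  have hx0 : 0 < 1 - Real.exp (-t) := by linarith
  have h0 := hasSum_geometric_of_lt_one hr0 hr1
  have h1 := h0.mul_left (t ^ s * Real.exp (-(a * t)) / Real.Gamma s)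
  convert h1 using 1
  · rfl
  · funext k
    have he : Real.exp (-((a + k) * t)) = Real.exp (-(a * t)) * Real.exp (-t) ^ k := by
      rw [← Real.exp_nat_mul, ← Real.exp_add]; ring_nf
    rw [he]; ring
  · field_simp

lemma aux_Fint (s a : ℝ) (n : ℕ) (hs : 1 < s) (ha : 0 < a) :
    IntegrableOn (fun t : ℝ => t ^ (s - 1) * Real.exp (-(a * t)) * (1 - Real.exp (-t)) ^ n)
      (Ioi 0) := by
  have hmaj : IntegrableOn (fun t : ℝ => t ^ (s - 1) * Real.exp (-(a * t))) (Ioi 0) := by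
    have := integrableOn_rpow_mul_exp_neg_mul_rpow (p := 1) (s := s - 1) (b := a)
      (by linarith) zero_lt_one ha
    refine this.congr_fun (fun t ht => ?_) measurableSet_Ioi
    simp only [Real.rpow_one, neg_mul]
  refine hmaj.mono' ?_ ?_
  · apply Measurable.aestronglyMeasurable
    fun_prop
  · filter_upwards [self_mem_ae_restrict measurableSet_Ioi] with t ht
    have ht0 : (0:ℝ) < t := ht
    have h1 : (0:ℝ) ≤ 1 - Real.exp (-t) := by
      have := Real.exp_lt_one_iff.mpr (show -t < 0 by linarith); linarith
    have h2 : 1 - Real.exp (-t) ≤ 1 := by have := Real.exp_pos (-t); linarith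
    have h3 : (0:ℝ) ≤ t ^ (s-1) * Real.exp (-(a*t)) := by positivity
    rw [norm_mul, norm_mul, Real.norm_eq_abs, Real.norm_eq_abs, Real.norm_eq_abs,
      abs_of_nonneg (Real.rpow_nonneg ht0.le _), abs_of_nonneg (Real.exp_pos _).le,
      abs_of_nonneg (pow_nonneg h1 n)]
    calc t ^ (s-1) * Real.exp (-(a*t)) * (1 - Real.exp (-t)) ^ n
        ≤ t ^ (s-1) * Real.exp (-(a*t)) * 1 := by
          refine mul_le_mul_of_nonneg_left ?_ h3
          exact pow_le_one₀ h1 h2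
      _ = t ^ (s-1) * Real.exp (-(a*t)) := mul_one _

lemma aux_main (s a : ℝ) (hs : 1 < s) (ha : 0 < a) :
    ∑' n : ℕ, ENNReal.ofReal ((1 / ((n:ℝ) + 1)) *
      ((∫ t in Ioi (0:ℝ), t ^ (s - 1) * Real.exp (-(a * t)) * (1 - Real.exp (-t)) ^ n) /
        Real.Gamma s)) =
    ENNReal.ofReal (s * ∑' k : ℕ, 1 / ((k : ℝ) + a) ^ (s + 1)) := by
  have hs0 : 0 < s := by linarith
  have hΓ : 0 < Real.Gamma s := Real.Gamma_pos_of_pos hs0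
  have hak : ∀ k : ℕ, (0:ℝ) < a + k := fun k => by positivity
  -- step A : rewrite each term as a lintegral
  have stepA : ∀ n : ℕ, ENNReal.ofReal ((1 / ((n:ℝ) + 1)) *
      ((∫ t in Ioi (0:ℝ), t ^ (s - 1) * Real.exp (-(a * t)) * (1 - Real.exp (-t)) ^ n) /
        Real.Gamma s)) =
      ∫⁻ t in Ioi (0:ℝ), ENNReal.ofReal ((1 / ((n:ℝ) + 1)) *
        ((t ^ (s - 1) * Real.exp (-(a * t)) * (1 - Real.exp (-t)) ^ n) / Real.Gamma s)) := by
    intro n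
    have hc : (1 / ((n:ℝ) + 1)) *
        ((∫ t in Ioi (0:ℝ), t ^ (s - 1) * Real.exp (-(a * t)) * (1 - Real.exp (-t)) ^ n) /
          Real.Gamma s) =
        ∫ t in Ioi (0:ℝ), (1 / ((n:ℝ) + 1)) *
          ((t ^ (s - 1) * Real.exp (-(a * t)) * (1 - Real.exp (-t)) ^ n) / Real.Gamma s) := by
      rw [integral_const_mul]
      congr 1
      rw [← integral_div]
    rw [hc]
    refine ofReal_integral_eq_lintegral_ofReal ?_ ?_
    · have := ((aux_Fint s a n hs ha).const_mul ((1 / ((n:ℝ) + 1)) * (Real.Gamma s)⁻¹))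
      exact this.congr (Eventually.of_forall fun t => by ring)
    · filter_upwards [self_mem_ae_restrict measurableSet_Ioi] with t ht
      have ht0 : (0:ℝ) < t := ht
      have h1 : (0:ℝ) ≤ 1 - Real.exp (-t) := by
        have := Real.exp_lt_one_iff.mpr (show -t < 0 by linarith); linarith
      have := Real.rpow_nonneg ht0.le (s-1)
      positivity
  simp_rw [stepA]
  -- interchange sum and lintegral
  rw [← lintegral_tsum (fun n => by apply Measurable.aemeasurable; fun_prop)]
  -- pointwise rewrite of the inner tsum
  have stepP : ∀ t ∈ Ioi (0:ℝ),
      (∑' n : ℕ, ENNReal.ofReal ((1 / ((n:ℝ) + 1)) *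
        ((t ^ (s - 1) * Real.exp (-(a * t)) * (1 - Real.exp (-t)) ^ n) / Real.Gamma s))) =
      ∑' k : ℕ, ENNReal.ofReal (t ^ s * Real.exp (-((a + k) * t)) / Real.Gamma s) := by
    intro t ht
    have ht0 : (0:ℝ) < t := ht
    have h1 := aux_logsum s a hs ht0
    have h2 := aux_geom s a hs ha ht0
    have hn1 : ∀ n : ℕ, 0 ≤ (1 / ((n:ℝ) + 1)) *
        ((t ^ (s - 1) * Real.exp (-(a * t)) * (1 - Real.exp (-t)) ^ n) / Real.Gamma s) := by
      intro n
      have hx : (0:ℝ) ≤ 1 - Real.exp (-t) := by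
        have := Real.exp_lt_one_iff.mpr (show -t < 0 by linarith); linarith
      have h3 := Real.rpow_nonneg ht0.le (s-1)
      have hΓ' := Real.Gamma_pos_of_pos hs0
      positivity
    have hn2 : ∀ k : ℕ, 0 ≤ t ^ s * Real.exp (-((a + k) * t)) / Real.Gamma s := by
      intro k
      have h3 := Real.rpow_nonneg ht0.le s
      have hΓ' := Real.Gamma_pos_of_pos hs0
      positivity
    rw [← ENNReal.ofReal_tsum_of_nonneg hn1 h1.summable,
      ← ENNReal.ofReal_tsum_of_nonneg hn2 h2.summable, h1.tsum_eq, h2.tsum_eq]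
  rw [setLIntegral_congr_fun_ae measurableSet_Ioi (ae_of_all _ stepP)]
  -- interchange back
  rw [lintegral_tsum (fun k => by apply Measurable.aemeasurable; fun_prop)]
  -- compute each integral
  have stepC : ∀ k : ℕ,
      (∫⁻ t in Ioi (0:ℝ), ENNReal.ofReal (t ^ s * Real.exp (-((a + k) * t)) / Real.Gamma s)) =
      ENNReal.ofReal (s * (1 / ((k:ℝ) + a) ^ (s + 1))) := by
    intro k
    have hintk : IntegrableOn (fun t : ℝ => t ^ ((s + 1) - 1) * Real.exp (-((a + k) * t)))
        (Ioi 0) := aux_integrable (by linarith) (hak k)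
    have heq : ∀ t : ℝ, t ^ s * Real.exp (-((a + k) * t)) / Real.Gamma s =
        (Real.Gamma s)⁻¹ * (t ^ ((s + 1) - 1) * Real.exp (-((a + k) * t))) := by
      intro t; rw [show s + 1 - 1 = s by ring]; ring
    simp_rw [heq]
    rw [← ofReal_integral_eq_lintegral_ofReal ((hintk.const_mul _))]
    · rw [integral_const_mul, integral_rpow_mul_exp_neg_mul_Ioi (by linarith) (hak k),
        Real.Gamma_add_one hs0.ne']
      congr 1
      rw [Real.div_rpow zero_le_one (hak k).le, Real.one_rpow, add_comm a (k:ℝ)]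
      field_simp
    · filter_upwards [self_mem_ae_restrict measurableSet_Ioi] with t ht
      have ht0 : (0:ℝ) < t := ht
      have h3 := Real.rpow_nonneg ht0.le (s + 1 - 1)
      positivity
  simp_rw [stepC]
  -- sum up
  have hsum : Summable (fun k : ℕ => 1 / ((k : ℝ) + a) ^ (s + 1)) := by
    have := (Real.summable_one_div_nat_add_rpow a (s + 1)).mpr (by linarith)
    refine this.congr (fun k => ?_)
    rw [abs_of_pos (by positivity : (0:ℝ) < (k:ℝ) + a)]
  have hnn : ∀ k : ℕ, 0 ≤ s * (1 / ((k : ℝ) + a) ^ (s + 1)) := by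
    intro k
    have : (0:ℝ) < (k:ℝ) + a := by positivity
    have := Real.rpow_nonneg this.le (s + 1)
    positivity
  rw [← ENNReal.ofReal_tsum_of_nonneg hnn (hsum.mul_left s), tsum_mul_left]

theorem hurwitz_zeta_binomial_sum (s a : ℝ) (hs : 1 < s) (ha : 0 < a) :
    HasSum
      (fun n : ℕ => (1 / ((n : ℝ) + 1)) *
        ∑ k ∈ Finset.range (n + 1), (n.choose k : ℝ) * (-1) ^ k / (a + k) ^ s)
      (s * ∑' k : ℕ, 1 / ((k : ℝ) + a) ^ (s + 1)) := by
  have hs0 : 0 < s := by linarith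
  have hΓ : 0 < Real.Gamma s := Real.Gamma_pos_of_pos hs0
  set L := s * ∑' k : ℕ, 1 / ((k : ℝ) + a) ^ (s + 1) with hL
  set f : ℕ → ℝ := fun n => (1 / ((n:ℝ) + 1)) *
      ((∫ t in Ioi (0:ℝ), t ^ (s - 1) * Real.exp (-(a * t)) * (1 - Real.exp (-t)) ^ n) /
        Real.Gamma s) with hf
  have hgoal : (fun n : ℕ => (1 / ((n : ℝ) + 1)) *
      ∑ k ∈ Finset.range (n + 1), (n.choose k : ℝ) * (-1) ^ k / (a + k) ^ s) = f := by
    funext n; rw [hf, aux_inner s a hs ha n]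
  rw [hgoal]
  have hnn : ∀ n, 0 ≤ f n := by
    intro n
    rw [hf]
    have hint : 0 ≤ ∫ t in Ioi (0:ℝ),
        t ^ (s - 1) * Real.exp (-(a * t)) * (1 - Real.exp (-t)) ^ n := by
      refine setIntegral_nonneg measurableSet_Ioi (fun t ht => ?_)
      have ht0 : (0:ℝ) < t := ht
      have hx : (0:ℝ) ≤ 1 - Real.exp (-t) := by
        have := Real.exp_lt_one_iff.mpr (show -t < 0 by linarith); linarith
      have h3 := Real.rpow_nonneg ht0.le (s-1)
      positivity
    have hn1 : (0:ℝ) < (n:ℝ) + 1 := by positivity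
    positivity
  have hLnn : 0 ≤ L := by
    rw [hL]
    refine mul_nonneg hs0.le (tsum_nonneg fun k => ?_)
    have : (0:ℝ) ≤ ((k:ℝ) + a) ^ (s+1) := Real.rpow_nonneg (by positivity) _
    positivity
  have key := aux_main s a hs ha
  set u : ℕ → ENNReal := fun n => ENNReal.ofReal (f n) with hu
  have hne : ∑' n, u n ≠ ⊤ := by rw [key]; exact ENNReal.ofReal_ne_top
  have hsummable : Summable f := by
    refine (ENNReal.summable_toReal hne).congr (fun n => ?_)
    rw [hu]; exact ENNReal.toReal_ofReal (hnn n)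
  refine hsummable.hasSum_iff.mpr ?_
  have h1 : ∑' n, f n = (∑' n, u n).toReal := by
    rw [ENNReal.tsum_toReal_eq (fun n => ENNReal.ofReal_ne_top)]
    exact tsum_congr fun n => (ENNReal.toReal_ofReal (hnn n)).symm
  rw [h1, key, ENNReal.toReal_ofReal hLnn]
end
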